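/- Let p be a strictly positive joint probability mass function of random variables (X_1, …, X_d, Y) on finite types, fix i ∈ {1,…,d}, a subset S ⊆ {1,…,d} with i ∈ S, and ε ≥ 0 satisfying: for every U ⊆ S \ {i} and every V ⊆ {1,…,d} \ S, both I_a(X_i; X_V | X_U, Y) ≤ ε and I_a(X_i; X_V | X_U) ≤ ε. Then the expected error admits the bound E_X | φ̂^S_X(i) − φ_X(i) | ≤ (1/d) ∑_{U ⊆ S, i ∈ U} ∑_{A ⊆ {1,…,d}, A ∩ S = U} [ I_a(X_i; X_{A\S} | X_{U\{i}}, Y) + I_a(X_i; X_{A\S} | X_{U\{i}}) ] / ((d−1) choose (|A|−1)). -/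

import Mathlib

open scoped Classical BigOperators

variable {d : ℕ} {𝒳 : Fin d → Type*} [∀ j, Fintype (𝒳 j)] {𝒴 : Type*} [Fintype 𝒴]

/-- The joint marginal probability `p(x_S, y)` of `(X_S, Y)` at the restriction of `x` to `S`. -/
noncomputable def margXY (p : (∀ j, 𝒳 j) → 𝒴 → ℝ) (S : Finset (Fin d))
    (x : ∀ j, 𝒳 j) (y : 𝒴) : ℝ :=
  ∑ x' : ∀ j, 𝒳 j, if ∀ j ∈ S, x' j = x j then p x' y else 0

/-- The marginal probability `p(x_S)` of `X_S` at the restriction of `x` to `S`. -/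
noncomputable def margX (p : (∀ j, 𝒳 j) → 𝒴 → ℝ) (S : Finset (Fin d))
    (x : ∀ j, 𝒳 j) : ℝ :=
  ∑ y, margXY p S x y

/-- The marginal probability `p(x)` of the full feature vector `X`. -/
noncomputable def pX (p : (∀ j, 𝒳 j) → 𝒴 → ℝ) (x : ∀ j, 𝒳 j) : ℝ :=
  ∑ y, p x y

/-- The conditional probability `p(y | x_S) = p(y, x_S) / p(x_S)`
(for `S = ∅` this is `p(y)` when `p` sums to one). -/
noncomputable def condY (p : (∀ j, 𝒳 j) → 𝒴 → ℝ) (S : Finset (Fin d))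
    (x : ∀ j, 𝒳 j) (y : 𝒴) : ℝ :=
  margXY p S x y / margX p S x

/-- The importance score `v_x(S) = ∑_y p(y | x) log p(y | x_S)`. -/
noncomputable def impScore (p : (∀ j, 𝒳 j) → 𝒴 → ℝ) (x : ∀ j, 𝒳 j)
    (S : Finset (Fin d)) : ℝ :=
  ∑ y, condY p Finset.univ x y * Real.log (condY p S x y)

/-- The marginal contribution `m_x(S, i) = v_x(S) − v_x(S \ {i})`. -/
noncomputable def margContrib (p : (∀ j, 𝒳 j) → 𝒴 → ℝ) (x : ∀ j, 𝒳 j)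
    (S : Finset (Fin d)) (i : Fin d) : ℝ :=
  impScore p x S - impScore p x (S.erase i)

/-- The Shapley value `φ_x(i)`. -/
noncomputable def shapley (p : (∀ j, 𝒳 j) → 𝒴 → ℝ) (x : ∀ j, 𝒳 j) (i : Fin d) : ℝ :=
  (1 / (d : ℝ)) * ∑ A : Finset (Fin d),
    if i ∈ A then margContrib p x A i / ((d - 1).choose (A.card - 1) : ℝ) else 0

/-- The restricted Shapley estimate `φ̂^S_x(i)` over a feature subset `S` containing `i`. -/
noncomputable def shapleyRes (p : (∀ j, 𝒳 j) → 𝒴 → ℝ) (x : ∀ j, 𝒳 j)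
    (S : Finset (Fin d)) (i : Fin d) : ℝ :=
  (1 / (S.card : ℝ)) * ∑ T ∈ S.powerset,
    if i ∈ T then margContrib p x T i / ((S.card - 1).choose (T.card - 1) : ℝ) else 0

/-- The absolute conditional mutual information `I_a(X_A; X_B | X_C)`. -/
noncomputable def IaX (p : (∀ j, 𝒳 j) → 𝒴 → ℝ) (A B C : Finset (Fin d)) : ℝ :=
  ∑ x : ∀ j, 𝒳 j, pX p x *
    |Real.log ((margX p (A ∪ B ∪ C) x * margX p C x) /
      (margX p (A ∪ C) x * margX p (B ∪ C) x))|

/-- The absolute conditional mutual information `I_a(X_A; X_B | X_C, Y)`. -/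
noncomputable def IaXY (p : (∀ j, 𝒳 j) → 𝒴 → ℝ) (A B C : Finset (Fin d)) : ℝ :=
  ∑ x : ∀ j, 𝒳 j, ∑ y, p x y *
    |Real.log ((margXY p (A ∪ B ∪ C) x y * margXY p C x y) /
      (margXY p (A ∪ C) x y * margXY p (B ∪ C) x y))|

/-!
The restricted estimate `φ̂^S_x(i)` is the Shapley value of the game `A ↦ v_x(A ∩ S)`: the Shapley
weights `w_n(k) = 1 / (n · C(n-1, k))` satisfy Pascal's rule `w_n(k) = w_{n+1}(k) + w_{n+1}(k+1)`,
so the weights of all coalitions `A` with `A ∩ S = U` add up to the weight of `U` inside `S`.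
Hence `φ̂ − φ` is a Shapley average of the differences `m_x(A ∩ S, i) − m_x(A, i)`. Multiplied by
`p(x)`, such a difference equals `∑_y p(x, y) (ι − ι_y)`, where `ι` and `ι_y` are the pointwise
conditional mutual informations of `X_i` and `X_{A∖S}` given `X_{(A∩S)∖{i}}`, respectively given
`X_{(A∩S)∖{i}}` and `Y = y`. Bounding `|ι − ι_y| ≤ |ι| + |ι_y|` and summing over `x` and `y` gives
the two `I_a` terms.
-/

section ShapleyWeights

open Finset Nat

noncomputable def shapleyWeight (n k : ℕ) : ℝ := 1 / (n * (n - 1).choose k)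

theorem shapleyWeight_nonneg (n k : ℕ) : 0 ≤ shapleyWeight n k := by
  unfold shapleyWeight
  positivity

theorem shapleyWeight_eq_factorial (k m : ℕ) :
    shapleyWeight (k + m + 1) k = k ! * m ! / (k + m + 1)! := by
  have h := Nat.add_choose_mul_factorial_mul_factorial m k
  rw [add_comm m k] at h
  rw [shapleyWeight, Nat.add_sub_cancel, Nat.factorial_succ, ← h]
  push_cast
  field_simp

theorem shapleyWeight_eq_add {n k : ℕ} (hk : k < n) :
    shapleyWeight n k = shapleyWeight (n + 1) k + shapleyWeight (n + 1) (k + 1) := by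
  obtain ⟨m, rfl⟩ := Nat.exists_eq_add_of_lt hk
  rw [show k + m + 1 + 1 = k + (m + 1) + 1 by ring, shapleyWeight_eq_factorial,
    shapleyWeight_eq_factorial, show k + (m + 1) + 1 = k + 1 + m + 1 by ring,
    shapleyWeight_eq_factorial, Nat.factorial_succ (k + 1 + m), Nat.factorial_succ m,
    Nat.factorial_succ k, show k + 1 + m = k + m + 1 by ring]
  push_cast
  field_simp
  ring

theorem sum_choose_mul_shapleyWeight {s k : ℕ} (hk : k < s) (e : ℕ) :
    ∑ b ∈ range (e + 1), (e.choose b : ℝ) * shapleyWeight (s + e) (k + b) = shapleyWeight s k := by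
  induction e with
  | zero => simp
  | succ e ih =>
    rw [← ih]
    calc ∑ b ∈ range (e + 1 + 1), ((e + 1).choose b : ℝ) * shapleyWeight (s + (e + 1)) (k + b)
        = ∑ b ∈ range (e + 2),
            ((e + 1).choose b : ℝ) * shapleyWeight (s + b + (e + 1 - b)) (k + b) :=
          sum_congr rfl fun b hb => by
            rw [mem_range] at hb
            rw [show s + b + (e + 1 - b) = s + (e + 1) by omega]
      _ = ∑ b ∈ range (e + 1), (e.choose b : ℝ) * (shapleyWeight (s + b + (e + 1 - b)) (k + b) +
            shapleyWeight (s + (b + 1) + (e - b)) (k + (b + 1))) := by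
          rw [sum_choose_succ_mul (fun b c => shapleyWeight (s + b + c) (k + b)),
            ← sum_add_distrib]
          simp only [mul_add]
      _ = ∑ b ∈ range (e + 1), (e.choose b : ℝ) * shapleyWeight (s + e) (k + b) := by
          refine sum_congr rfl fun b hb => ?_
          rw [mem_range] at hb
          rw [show s + b + (e + 1 - b) = s + e + 1 by omega,
            show s + (b + 1) + (e - b) = s + e + 1 by omega, ← add_assoc,
            ← shapleyWeight_eq_add (by omega)]

variable {α : Type*} [DecidableEq α]

theorem sum_powerset_filter_inter_eq {M : Type*} [AddCommMonoid M] {P S U : Finset α}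
    (hSP : S ⊆ P) (hUS : U ⊆ S) (f : Finset α → M) :
    ∑ A ∈ P.powerset with A ∩ S = U, f A = ∑ B ∈ (P \ S).powerset, f (U ∪ B) := by
  refine sum_nbij' (· \ S) (U ∪ ·) (fun A hA => ?_) (fun B hB => ?_) (fun A hA => ?_)
    (fun B hB => ?_) (fun A hA => ?_)
  all_goals simp only [mem_filter, mem_powerset] at *
  · exact sdiff_subset_sdiff hA.1 subset_rfl
  · grind
  · rw [← hA.2, union_comm, sdiff_union_inter]
  · grind
  · rw [← hA.2, union_comm, sdiff_union_inter]

theorem sum_shapleyWeight_filter_inter {P S U : Finset α} (hSP : S ⊆ P) (hUS : U ⊆ S)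
    (hU : U.Nonempty) :
    ∑ A ∈ P.powerset with A ∩ S = U, shapleyWeight #P (#A - 1) = shapleyWeight #S (#U - 1) := by
  have hdisj (B) (hB : B ∈ (P \ S).powerset) : Disjoint U B :=
    disjoint_sdiff.mono hUS (mem_powerset.1 hB)
  rw [sum_powerset_filter_inter_eq hSP hUS,
    sum_congr rfl fun B hB => by rw [card_union_of_disjoint (hdisj B hB)],
    sum_powerset_apply_card (fun m => shapleyWeight #P (#U + m - 1)),
    ← card_sdiff_add_card_eq_card hSP]
  have hU₁ : 0 < #U := hU.card_pos
  rw [← sum_choose_mul_shapleyWeight (by have := card_le_card hUS; omega : #U - 1 < #S)]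
  refine sum_congr rfl fun m _ => ?_
  rw [nsmul_eq_mul, add_comm #(P \ S), show #U + m - 1 = #U - 1 + m by omega]

theorem sum_powerset_ite_sum_ite_inter {M : Type*} [AddCommMonoid M] {S : Finset α} {i : α}
    (hi : i ∈ S) (𝒜 : Finset (Finset α)) (g : Finset α → Finset α → M) :
    ∑ U ∈ S.powerset, (if i ∈ U then ∑ A ∈ 𝒜, (if A ∩ S = U then g U A else 0) else 0)
      = ∑ A ∈ 𝒜, if i ∈ A then g (A ∩ S) A else 0 := by
  calc _ = ∑ U ∈ S.powerset, ∑ A ∈ 𝒜,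
        if A ∩ S = U then (if i ∈ A then g (A ∩ S) A else 0) else 0 := by
        refine sum_congr rfl fun U _ => ?_
        split_ifs with hiU
        · refine sum_congr rfl fun A _ => ?_
          by_cases h : A ∩ S = U
          · subst h
            simp [(mem_inter.1 hiU).1]
          · simp [h]
        · refine (sum_eq_zero fun A _ => ?_).symm
          split_ifs with h hiA
          · exact absurd (h ▸ mem_inter.2 ⟨hiA, hi⟩) hiU
          all_goals rfl
    _ = _ := by
        rw [sum_comm]
        exact sum_congr rfl fun A _ => by
          rw [sum_ite_eq, if_pos (mem_powerset.2 inter_subset_right)]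

/-- With `c T = v T - v (T.erase i)` this is the Shapley value of `i` in the game `v` on `P`. -/
noncomputable def shapleyAverage (P : Finset α) (c : Finset α → ℝ) (i : α) : ℝ :=
  ∑ T ∈ P.powerset, if i ∈ T then shapleyWeight #P (#T - 1) * c T else 0

theorem shapleyAverage_eq (P : Finset α) (c : Finset α → ℝ) (i : α) :
    shapleyAverage P c i = (1 / (#P : ℝ)) *
      ∑ T ∈ P.powerset, if i ∈ T then c T / ((#P - 1).choose (#T - 1) : ℝ) else 0 := by
  rw [shapleyAverage, mul_sum]
  refine sum_congr rfl fun T _ => ?_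
  split_ifs
  · rw [shapleyWeight]
    ring
  · rw [mul_zero]

theorem shapleyAverage_univ [Fintype α] (c : Finset α → ℝ) (i : α) :
    shapleyAverage univ c i = (1 / (Fintype.card α : ℝ)) *
      ∑ T, if i ∈ T then c T / ((Fintype.card α - 1).choose (#T - 1) : ℝ) else 0 := by
  rw [shapleyAverage_eq, powerset_univ, Finset.card_univ]

theorem shapleyAverage_sub (P : Finset α) (c c' : Finset α → ℝ) (i : α) :
    shapleyAverage P c i - shapleyAverage P c' i = shapleyAverage P (fun T => c T - c' T) i := by
  simp only [shapleyAverage, ← sum_sub_distrib]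
  refine sum_congr rfl fun T _ => ?_
  split_ifs <;> ring

theorem abs_shapleyAverage_le (P : Finset α) (c : Finset α → ℝ) (i : α) :
    |shapleyAverage P c i| ≤ shapleyAverage P (fun T => |c T|) i :=
  (abs_sum_le_sum_abs _ _).trans <| sum_le_sum fun T _ => by
    split_ifs <;> simp [abs_mul, abs_of_nonneg (shapleyWeight_nonneg _ _)]

theorem sum_mul_shapleyAverage {ι : Type*} (s : Finset ι) (w : ι → ℝ) (P : Finset α)
    (c : ι → Finset α → ℝ) (i : α) :
    ∑ x ∈ s, w x * shapleyAverage P (c x) i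
      = shapleyAverage P (fun T => ∑ x ∈ s, w x * c x T) i := by
  simp only [shapleyAverage, mul_sum]
  rw [sum_comm]
  refine sum_congr rfl fun T _ => ?_
  split_ifs <;> simp [mul_left_comm]

theorem shapleyAverage_mono {P : Finset α} {c c' : Finset α → ℝ} {i : α}
    (h : ∀ T ⊆ P, i ∈ T → c T ≤ c' T) : shapleyAverage P c i ≤ shapleyAverage P c' i :=
  sum_le_sum fun T hT => by
    split_ifs with hi
    · exact mul_le_mul_of_nonneg_left (h T (mem_powerset.1 hT) hi) (shapleyWeight_nonneg _ _)
    · rfl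

theorem shapleyAverage_inter {P S : Finset α} {i : α} (hSP : S ⊆ P) (hi : i ∈ S)
    (c : Finset α → ℝ) : shapleyAverage S c i = shapleyAverage P (fun A => c (A ∩ S)) i := by
  rw [shapleyAverage, shapleyAverage,
    ← sum_powerset_ite_sum_ite_inter hi P.powerset (fun U A => shapleyWeight #P (#A - 1) * c U)]
  refine sum_congr rfl fun U hU => ?_
  split_ifs with hiU
  · rw [← sum_filter, ← sum_mul, sum_shapleyWeight_filter_inter hSP (mem_powerset.1 hU) ⟨i, hiU⟩]
  · rfl

end ShapleyWeights

theorem Real.log_mul_div_mul {a b c e : ℝ} (ha : 0 < a) (hb : 0 < b) (hc : 0 < c) (he : 0 < e) :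
    Real.log (a * b / (c * e)) = Real.log a + Real.log b - Real.log c - Real.log e := by
  rw [Real.log_div (by positivity) (by positivity), Real.log_mul ha.ne' hb.ne',
    Real.log_mul hc.ne' he.ne']
  ring

noncomputable def pmiX (p : (∀ j, 𝒳 j) → 𝒴 → ℝ) (A B C : Finset (Fin d)) (x : ∀ j, 𝒳 j) : ℝ :=
  Real.log ((margX p (A ∪ B ∪ C) x * margX p C x) / (margX p (A ∪ C) x * margX p (B ∪ C) x))

noncomputable def pmiXY (p : (∀ j, 𝒳 j) → 𝒴 → ℝ) (A B C : Finset (Fin d)) (x : ∀ j, 𝒳 j)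
    (y : 𝒴) : ℝ :=
  Real.log ((margXY p (A ∪ B ∪ C) x y * margXY p C x y) /
    (margXY p (A ∪ C) x y * margXY p (B ∪ C) x y))

section MarginalContributions

open Finset

variable {p : (∀ j, 𝒳 j) → 𝒴 → ℝ}

theorem margXY_pos (hpos : ∀ x y, 0 < p x y) (S : Finset (Fin d)) (x : ∀ j, 𝒳 j) (y : 𝒴) :
    0 < margXY p S x y :=
  sum_pos' (fun x' _ => by split_ifs <;> simp [(hpos x' y).le]) ⟨x, mem_univ x, by simp [hpos x y]⟩

theorem margX_pos [Nonempty 𝒴] (hpos : ∀ x y, 0 < p x y) (S : Finset (Fin d)) (x : ∀ j, 𝒳 j) :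
    0 < margX p S x :=
  sum_pos (fun y _ => margXY_pos hpos S x y) univ_nonempty

theorem pX_mul_condY_univ (hpos : ∀ x y, 0 < p x y) (x : ∀ j, 𝒳 j) (y : 𝒴) :
    pX p x * condY p univ x y = p x y := by
  have : Nonempty 𝒴 := ⟨y⟩
  have hjoint (y : 𝒴) : margXY p univ x y = p x y := by simp [margXY, ← funext_iff]
  have hmarg : margX p univ x = pX p x := by simp [margX, pX, hjoint]
  have hpX := hmarg ▸ margX_pos hpos univ x
  rw [condY, hjoint, hmarg]
  field_simp

theorem log_condY (hpos : ∀ x y, 0 < p x y) (S : Finset (Fin d)) (x : ∀ j, 𝒳 j) (y : 𝒴) :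
    Real.log (condY p S x y) = Real.log (margXY p S x y) - Real.log (margX p S x) :=
  have : Nonempty 𝒴 := ⟨y⟩
  Real.log_div (margXY_pos hpos S x y).ne' (margX_pos hpos S x).ne'

theorem pX_mul_margContrib_sub (hpos : ∀ x y, 0 < p x y) {i : Fin d} {B C : Finset (Fin d)}
    (hiB : i ∉ B) (hiC : i ∉ C) (x : ∀ j, 𝒳 j) :
    pX p x * (margContrib p x ({i} ∪ C) i - margContrib p x ({i} ∪ B ∪ C) i)
      = ∑ y, p x y * (pmiX p {i} B C x - pmiXY p {i} B C x y) := by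
  have hC : ({i} ∪ C).erase i = C := by grind
  have hBC : ({i} ∪ B ∪ C).erase i = B ∪ C := by grind
  simp only [margContrib, impScore, hC, hBC, ← sum_sub_distrib, mul_sum]
  refine sum_congr rfl fun y _ => ?_
  have : Nonempty 𝒴 := ⟨y⟩
  rw [← pX_mul_condY_univ hpos x y, pmiX, pmiXY]
  simp only [log_condY hpos, Real.log_mul_div_mul (margX_pos hpos _ x) (margX_pos hpos _ x)
    (margX_pos hpos _ x) (margX_pos hpos _ x), Real.log_mul_div_mul (margXY_pos hpos _ x y)
    (margXY_pos hpos _ x y) (margXY_pos hpos _ x y) (margXY_pos hpos _ x y)]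
  ring

theorem sum_pX_mul_abs_margContrib_sub_le (hpos : ∀ x y, 0 < p x y) {i : Fin d}
    {B C : Finset (Fin d)} (hiB : i ∉ B) (hiC : i ∉ C) :
    ∑ x, pX p x * |margContrib p x ({i} ∪ C) i - margContrib p x ({i} ∪ B ∪ C) i|
      ≤ IaXY p {i} B C + IaX p {i} B C := by
  rw [IaXY, IaX, ← sum_add_distrib]
  refine sum_le_sum fun x _ => ?_
  calc pX p x * |margContrib p x ({i} ∪ C) i - margContrib p x ({i} ∪ B ∪ C) i|
      = |∑ y, p x y * (pmiX p {i} B C x - pmiXY p {i} B C x y)| := by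
        rw [← pX_mul_margContrib_sub hpos hiB hiC, abs_mul, abs_of_nonneg
          (show 0 ≤ pX p x from sum_nonneg fun y _ => (hpos x y).le)]
    _ ≤ ∑ y, p x y * (|pmiXY p {i} B C x y| + |pmiX p {i} B C x|) :=
        (abs_sum_le_sum_abs _ _).trans <| sum_le_sum fun y _ => by
          rw [abs_mul, abs_of_pos (hpos x y)]
          exact mul_le_mul_of_nonneg_left ((abs_sub _ _).trans_eq (add_comm _ _)) (hpos x y).le
    _ = ∑ y, p x y * |pmiXY p {i} B C x y| + pX p x * |pmiX p {i} B C x| := by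
        rw [pX, sum_mul, ← sum_add_distrib]
        simp only [mul_add]

theorem sum_pX_mul_abs_margContrib_inter_sub_le (hpos : ∀ x y, 0 < p x y) {i : Fin d}
    {S A : Finset (Fin d)} (hiS : i ∈ S) (hiA : i ∈ A) :
    ∑ x, pX p x * |margContrib p x (A ∩ S) i - margContrib p x A i|
      ≤ IaXY p {i} (A \ S) ((A ∩ S).erase i) + IaX p {i} (A \ S) ((A ∩ S).erase i) := by
  have hU : {i} ∪ (A ∩ S).erase i = A ∩ S := by grind
  have hA : {i} ∪ (A \ S) ∪ (A ∩ S).erase i = A := by grind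
  have h := sum_pX_mul_abs_margContrib_sub_le hpos (p := p) (B := A \ S) (C := (A ∩ S).erase i)
    (by simp [hiS]) (notMem_erase i _)
  rwa [hU, hA] at h

theorem shapleyRes_sub_shapley {i : Fin d} {S : Finset (Fin d)} (hiS : i ∈ S) (x : ∀ j, 𝒳 j) :
    shapleyRes p x S i - shapley p x i
      = shapleyAverage univ (fun A => margContrib p x (A ∩ S) i - margContrib p x A i) i := by
  have hres : shapleyRes p x S i = shapleyAverage S (margContrib p x · i) i :=
    (shapleyAverage_eq _ _ _).symm
  have hfull : shapley p x i = shapleyAverage univ (margContrib p x · i) i := by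
    rw [shapleyAverage_univ, Fintype.card_fin]
    rfl
  rw [hres, hfull, shapleyAverage_inter (subset_univ S) hiS, shapleyAverage_sub]

end MarginalContributions

theorem restricted_shapley_error_le_Ia_sum_general (p : (∀ j, 𝒳 j) → 𝒴 → ℝ)
    (hpos : ∀ x y, 0 < p x y)
    (i : Fin d) (S : Finset (Fin d)) (hiS : i ∈ S) :
    ∑ x : ∀ j, 𝒳 j, pX p x * |shapleyRes p x S i - shapley p x i|
      ≤ (1 / (d : ℝ)) * ∑ U ∈ S.powerset,
          (if i ∈ U then
            ∑ A : Finset (Fin d),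
              (if A ∩ S = U then
                (IaXY p {i} (A \ S) (U.erase i) + IaX p {i} (A \ S) (U.erase i)) /
                  ((d - 1).choose (A.card - 1) : ℝ)
              else 0)
          else 0) := by
  calc ∑ x, pX p x * |shapleyRes p x S i - shapley p x i|
      ≤ ∑ x, pX p x * shapleyAverage Finset.univ
          (fun A => |margContrib p x (A ∩ S) i - margContrib p x A i|) i :=
        Finset.sum_le_sum fun x _ => by
          rw [shapleyRes_sub_shapley hiS]
          exact mul_le_mul_of_nonneg_left (abs_shapleyAverage_le _ _ _)
            (Finset.sum_nonneg fun y _ => (hpos x y).le)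
    _ = shapleyAverage Finset.univ
          (fun A => ∑ x, pX p x * |margContrib p x (A ∩ S) i - margContrib p x A i|) i :=
        sum_mul_shapleyAverage _ _ _ _ _
    _ ≤ shapleyAverage Finset.univ (fun A => IaXY p {i} (A \ S) ((A ∩ S).erase i) +
          IaX p {i} (A \ S) ((A ∩ S).erase i)) i :=
        shapleyAverage_mono fun A _ hiA => sum_pX_mul_abs_margContrib_inter_sub_le hpos hiS hiA
    _ = _ := by
        rw [shapleyAverage_univ, Fintype.card_fin, sum_powerset_ite_sum_ite_inter hiS]

/-- The key intermediate bound in the proof of Theorem 1: the expected absolute error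
between the restricted Shapley estimate and the Shapley value is bounded by the
Shapley-weighted sum of absolute conditional mutual informations. -/
theorem restricted_shapley_error_le_Ia_sum (p : (∀ j, 𝒳 j) → 𝒴 → ℝ)
    (hpos : ∀ x y, 0 < p x y)
    (hsum : ∑ x : ∀ j, 𝒳 j, ∑ y, p x y = 1)
    (i : Fin d) (S : Finset (Fin d)) (hiS : i ∈ S)
    (ε : ℝ) (hε : 0 ≤ ε)
    (hIa : ∀ U ⊆ S.erase i, ∀ V ⊆ Finset.univ \ S,
      IaXY p {i} V U ≤ ε ∧ IaX p {i} V U ≤ ε) :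
    ∑ x : ∀ j, 𝒳 j, pX p x * |shapleyRes p x S i - shapley p x i|
      ≤ (1 / (d : ℝ)) * ∑ U ∈ S.powerset,
          (if i ∈ U then
            ∑ A : Finset (Fin d),
              (if A ∩ S = U then
                (IaXY p {i} (A \ S) (U.erase i) + IaX p {i} (A \ S) (U.erase i)) /
                  ((d - 1).choose (A.card - 1) : ℝ)
              else 0)
          else 0) :=
  restricted_shapley_error_le_Ia_sum_general p hpos i S hiS
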